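/- arXiv:2007.00568 — 2 statements merged into one kernel-verified Lean document; each statement's English description precedes it below -/
import Mathlib

section
/- Let P be a Borel probability measure on Euclidean space ℝ^k, let K > 0 and 0 < ε < 1/4, and suppose P({y : ‖y‖₂ ≤ K}) ≥ 1 − ε. Then every spatial median θ⋆ of P (i.e., every global minimizer of f_P) satisfies ‖θ⋆‖₂ ≤ 3K. -/
/-!
The triangle inequality gives `‖y - θ‖ - ‖y‖ ≥ -‖θ‖` everywhere and `≥ ‖θ‖ - 2K` on the ball
`‖y‖ ≤ K`. Integrating, `f_P(θ) ≥ 2 (‖θ‖ - K) P(ball) - ‖θ‖`, which is positive once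
`‖θ‖ > 3K` and `P(ball) > 3/4`. Since `f_P(0) = 0`, such a `θ` cannot be a minimizer.
-/

open MeasureTheory Metric

section

variable {E : Type*} [NormedAddCommGroup E]

theorem neg_norm_add_indicator_closedBall_le (θ y : E) (K : ℝ) :
    -‖θ‖ + (closedBall 0 K).indicator (fun _ => 2 * (‖θ‖ - K)) y ≤ ‖y - θ‖ - ‖y‖ := by
  have hθ : ‖θ‖ - ‖y‖ ≤ ‖y - θ‖ := norm_sub_rev θ y ▸ norm_sub_norm_le θ y
  by_cases hy : y ∈ closedBall 0 K
  · rw [Set.indicator_of_mem hy]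
    rw [mem_closedBall_zero_iff] at hy
    linarith
  · rw [Set.indicator_of_notMem hy]
    linarith [norm_sub_norm_le y θ]

variable [MeasurableSpace E]

noncomputable def spatialMedianObjective (μ : Measure E) (θ : E) : ℝ :=
  ∫ y, (‖y - θ‖ - ‖y‖) ∂μ

@[simp]
theorem spatialMedianObjective_zero (μ : Measure E) : spatialMedianObjective μ 0 = 0 := by
  simp [spatialMedianObjective]

variable [OpensMeasurableSpace E]

theorem integrable_norm_sub_sub_norm (μ : Measure E) [IsFiniteMeasure μ] (θ : E) :
    Integrable (fun y => ‖y - θ‖ - ‖y‖) μ := by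
  refine (integrable_const ‖θ‖).mono' (by fun_prop) (ae_of_all _ fun y => ?_)
  simpa [norm_sub_rev y] using abs_norm_sub_norm_le (y - θ) y

theorem two_mul_sub_mul_measureReal_closedBall_sub_norm_le_spatialMedianObjective
    (μ : Measure E) [IsProbabilityMeasure μ] (θ : E) (K : ℝ) :
    2 * (‖θ‖ - K) * μ.real (closedBall 0 K) - ‖θ‖ ≤ spatialMedianObjective μ θ := by
  have hball : MeasurableSet (closedBall (0 : E) K) := measurableSet_closedBall
  calc 2 * (‖θ‖ - K) * μ.real (closedBall 0 K) - ‖θ‖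
      = ∫ y, (-‖θ‖ + (closedBall 0 K).indicator (fun _ => 2 * (‖θ‖ - K)) y) ∂μ := by
        rw [integral_add (integrable_const _) ((integrable_const _).indicator hball),
          integral_indicator_const _ hball]
        simp only [integral_const, probReal_univ, smul_eq_mul]
        ring
    _ ≤ spatialMedianObjective μ θ :=
        integral_mono ((integrable_const _).add ((integrable_const _).indicator hball))
          (integrable_norm_sub_sub_norm μ θ) (neg_norm_add_indicator_closedBall_le θ · K)

end

theorem spatial_median_localization_general
    (k : ℕ) (P : Measure (EuclideanSpace ℝ (Fin k))) [IsProbabilityMeasure P]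
    (K ε : ℝ) (hε : ε < 1/4)
    (hmass : ENNReal.ofReal (1 - ε) ≤ P {y | ‖y‖ ≤ K})
    (θstar : EuclideanSpace ℝ (Fin k))
    (hmin : ∀ θ : EuclideanSpace ℝ (Fin k),
      (∫ y, (‖y - θstar‖ - ‖y‖) ∂P) ≤ ∫ y, (‖y - θ‖ - ‖y‖) ∂P) :
    ‖θstar‖ ≤ 3 * K := by
  have hball : {y | ‖y‖ ≤ K} = closedBall (0 : EuclideanSpace ℝ (Fin k)) K := by
    ext y
    simp
  have hmass_real : 1 - ε ≤ P.real (closedBall 0 K) := by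
    rw [← hball]
    exact (ENNReal.ofReal_le_iff_le_toReal (measure_ne_top _ _)).mp hmass
  have hlower :=
    two_mul_sub_mul_measureReal_closedBall_sub_norm_le_spatialMedianObjective P θstar K
  have hnonpos : spatialMedianObjective P θstar ≤ 0 :=
    (hmin 0).trans_eq (spatialMedianObjective_zero P)
  by_contra! hfar
  nlinarith [norm_nonneg θstar]

theorem spatial_median_localization
    (k : ℕ) (P : Measure (EuclideanSpace ℝ (Fin k))) [IsProbabilityMeasure P]
    (K ε : ℝ) (hK : 0 < K) (hε0 : 0 < ε) (hε : ε < 1/4)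
    (hmass : ENNReal.ofReal (1 - ε) ≤ P {y | ‖y‖ ≤ K})
    (θstar : EuclideanSpace ℝ (Fin k))
    (hmin : ∀ θ : EuclideanSpace ℝ (Fin k),
      (∫ y, (‖y - θstar‖ - ‖y‖) ∂P) ≤ ∫ y, (‖y - θ‖ - ‖y‖) ∂P) :
    ‖θstar‖ ≤ 3 * K :=
  spatial_median_localization_general k P K ε hε hmass θstar hmin
end

section
/- Let P be a Borel probability measure on Euclidean space ℝ^k and let θ₀ ∈ ℝ^k satisfy P({θ₀}) = 0. Then the spatial median objective f_P(θ) = ∫ (‖y − θ‖₂ − ‖y‖₂) dP(y) is differentiable at θ₀, with gradient −∫ U(y − θ₀) dP(y), where U is the spatial sign function defined by U(z) = z/‖z‖₂ for z ≠ 0 and U(0) = 0. -/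
open MeasureTheory

/-- The spatial sign function: `U z = z / ‖z‖` for `z ≠ 0`, and `U 0 = 0`
(note `‖0‖⁻¹ • 0 = 0`). -/
noncomputable def spatialSign {k : ℕ} (z : EuclideanSpace ℝ (Fin k)) :
    EuclideanSpace ℝ (Fin k) := ‖z‖⁻¹ • z

/-!
For `y ≠ θ₀` the map `θ ↦ ‖y - θ‖` is differentiable at `θ₀` with gradient `-U(y - θ₀)`, and
`P {θ₀} = 0` makes this hold for `P`-almost every `y`. The integrands `θ ↦ ‖y - θ‖ - ‖y‖` are
`1`-Lipschitz, so dominated convergence allows differentiation under the integral sign.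
-/

open InnerProductSpace Filter Topology

section Gradient

variable {E : Type*} [NormedAddCommGroup E] [InnerProductSpace ℝ E] [CompleteSpace E]

theorem hasGradientAt_norm {x : E} (hx : x ≠ 0) : HasGradientAt (‖·‖) (‖x‖⁻¹ • x) x := by
  have hsqrt := (hasStrictFDerivAt_norm_sq x).hasFDerivAt.sqrt (by positivity)
  simp only [Real.sqrt_sq (norm_nonneg _)] at hsqrt
  rw [hasGradientAt_iff_hasFDerivAt]
  refine hsqrt.congr_fderiv (ContinuousLinearMap.ext fun v ↦ ?_)
  simp
  field_simp

theorem hasGradientAt_integral_of_dominated_loc_of_lip {α : Type*} [MeasurableSpace α]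
    {μ : Measure α} {F : E → α → ℝ} {F' : α → E} {x₀ : E} {s : Set E} {bound : α → ℝ}
    (hs : s ∈ 𝓝 x₀) (hF_meas : ∀ᶠ x in 𝓝 x₀, AEStronglyMeasurable (F x) μ)
    (hF_int : Integrable (F x₀) μ) (hF'_meas : AEStronglyMeasurable F' μ)
    (h_lip : ∀ᵐ a ∂μ, LipschitzOnWith (Real.nnabs (bound a)) (F · a) s)
    (bound_integrable : Integrable bound μ)
    (h_diff : ∀ᵐ a ∂μ, HasGradientAt (F · a) (F' a) x₀) :
    HasGradientAt (fun x ↦ ∫ a, F x a ∂μ) (∫ a, F' a ∂μ) x₀ := by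
  obtain ⟨hF'_dual_int, hderiv⟩ := hasFDerivAt_integral_of_dominated_loc_of_lip hs hF_meas
    hF_int ((toDual ℝ E).continuous.comp_aestronglyMeasurable hF'_meas) h_lip
    bound_integrable h_diff
  have hF'_int : Integrable F' μ :=
    (integrable_norm_iff hF'_meas).1 (by simpa using hF'_dual_int.norm)
  rw [hasGradientAt_iff_hasFDerivAt]
  refine hderiv.congr_fderiv (ContinuousLinearMap.ext fun v ↦ ?_)
  rw [ContinuousLinearMap.integral_apply hF'_dual_int]
  simp only [toDual_apply_apply, real_inner_comm v]
  exact integral_inner hF'_int v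

end Gradient

section SpatialSign

variable {k : ℕ}

theorem spatialSign_neg (z : EuclideanSpace ℝ (Fin k)) : spatialSign (-z) = -spatialSign z := by
  simp [spatialSign]

theorem measurable_spatialSign : Measurable (spatialSign (k := k)) :=
  measurable_norm.inv.smul measurable_id

theorem hasGradientAt_norm_const_sub {y θ : EuclideanSpace ℝ (Fin k)} (h : θ ≠ y) :
    HasGradientAt (fun θ' ↦ ‖y - θ'‖) (-spatialSign (y - θ)) θ := by
  rw [← spatialSign_neg, neg_sub]
  simp only [norm_sub_rev y]
  exact (hasGradientAt_norm (sub_ne_zero.2 h)).hasFDerivAt.comp θ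
    ((hasFDerivAt_id θ).sub_const y)

theorem lipschitzWith_norm_const_sub_sub_norm (y : EuclideanSpace ℝ (Fin k)) :
    LipschitzWith 1 (fun θ ↦ ‖y - θ‖ - ‖y‖) :=
  LipschitzWith.of_dist_le_mul fun a b ↦ by
    rw [NNReal.coe_one, one_mul, dist_sub_right, Real.dist_eq, dist_eq_norm',
      ← sub_sub_sub_cancel_left a b y]
    exact abs_norm_sub_norm_le _ _

end SpatialSign

theorem spatial_median_objective_hasGradientAt
    (k : ℕ) (P : Measure (EuclideanSpace ℝ (Fin k))) [IsProbabilityMeasure P]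
    (θ₀ : EuclideanSpace ℝ (Fin k)) (hθ₀ : P {θ₀} = 0) :
    HasGradientAt (fun θ : EuclideanSpace ℝ (Fin k) => ∫ y, (‖y - θ‖ - ‖y‖) ∂P)
      (-∫ y, spatialSign (y - θ₀) ∂P) θ₀ := by
  have h_cont (θ) : Continuous fun y : EuclideanSpace ℝ (Fin k) ↦ ‖y - θ‖ - ‖y‖ := by fun_prop
  have h_int : Integrable (fun y ↦ ‖y - θ₀‖ - ‖y‖) P :=
    Integrable.of_bound (h_cont θ₀).aestronglyMeasurable ‖θ₀‖ <| .of_forall fun y ↦ by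
      simpa using abs_norm_sub_norm_le (y - θ₀) y
  have h_ne : ∀ᵐ y ∂P, y ∉ ({θ₀} : Set _) := measure_eq_zero_iff_ae_notMem.1 hθ₀
  rw [← integral_neg]
  refine hasGradientAt_integral_of_dominated_loc_of_lip (s := Set.univ) (bound := fun _ ↦ 1)
    univ_mem (.of_forall fun θ ↦ (h_cont θ).aestronglyMeasurable) h_int
    (measurable_spatialSign.comp (measurable_id.sub_const θ₀)).neg.aestronglyMeasurable
    (.of_forall fun y ↦ by simpa using lipschitzWith_norm_const_sub_sub_norm y)
    (integrable_const 1) ?_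
  filter_upwards [h_ne] with y hy
  exact (hasGradientAt_norm_const_sub (Ne.symm hy)).sub_const ‖y‖
end
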